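/- arXiv:2011.04563 — 4 statements merged into one kernel-verified Lean document; each statement's English description precedes it below -/
import Mathlib

section
/- For all integers n ≥ 1 and 1 ≤ k ≤ n, the probabilities p_k^(n) satisfy the recursion (n(n+1)/2)·p_k^(n) = Σ_{j=k−1}^{n−1} (n−j)·p_{k−1}^(j), equivalently p_k^(n) = (2/(n(n+1)))·Σ_{j=k−1}^{n−1} (n−j)·p_{k−1}^(j). -/
open Finset

/-- `p n k` is the probability `p_k^{(n)} = P(f_0(T_n) = k)` that the random convex chain
`T_n` has exactly `k` vertices (besides the two corners), given by Buchta's formula: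
`p_k^{(n)} = 2^k · Σ_{i_1+⋯+i_k = n, i_j ≥ 1} Π_{j=1}^{k} i_j / (s_j (s_j + 1))`,
where `s_j = i_1 + ⋯ + i_j`.  In particular `p 0 0 = 1` and `p n 0 = 0` for `n ≥ 1`,
and `p n k = 0` for `k > n`. -/
noncomputable def p (n k : ℕ) : ℝ :=
  2 ^ k *
    ∑ i ∈ (Fintype.piFinset fun _ : Fin k => Finset.Icc 1 n).filter
        (fun i => ∑ j, i j = n),
      ∏ j : Fin k,
        (i j : ℝ) /
          (((∑ l ∈ Finset.univ.filter (fun l => l ≤ j), i l : ℕ) : ℝ) *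
            (((∑ l ∈ Finset.univ.filter (fun l => l ≤ j), i l : ℕ) : ℝ) + 1))

lemma aux_alg (m : ℕ) (A B P : ℝ) (hA : A ≠ 0) :
    A / 2 * (2 ^ (m + 1) * (B / A * P)) = B * (2 ^ m * P) := by
  field_simp
  ring

lemma filter_le_castSucc (m : ℕ) (j' : Fin m) :
    (Finset.univ.filter (fun l : Fin (m+1) => l ≤ Fin.castSucc j'))
      = (Finset.univ.filter (fun l : Fin m => l ≤ j')).map Fin.castSuccEmb := by
  ext a
  simp only [mem_filter, mem_univ, true_and, Finset.mem_map, Fin.castSuccEmb]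
  constructor
  · intro ha
    have h1 : a.val ≤ j'.val := ha
    have h2 : a.val < m := lt_of_le_of_lt h1 j'.isLt
    exact ⟨⟨a.val, h2⟩, h1, by ext; simp⟩
  · rintro ⟨l, hl, rfl⟩
    exact hl

lemma partial_castSucc (m : ℕ) (i : Fin (m+1) → ℕ) (j' : Fin m) :
    ∑ l ∈ Finset.univ.filter (fun l => l ≤ Fin.castSucc j'), i l
      = ∑ l ∈ Finset.univ.filter (fun l => l ≤ j'), i (Fin.castSucc l) := by
  rw [filter_le_castSucc, Finset.sum_map]
  rfl

lemma filter_le_last (m : ℕ) :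
    (Finset.univ.filter (fun l : Fin (m+1) => l ≤ Fin.last m)) = Finset.univ := by
  simp [Fin.le_last]

/-- For all `n ≥ 1` and `1 ≤ k ≤ n`,
`(n(n+1)/2) · p_k^{(n)} = Σ_{j=k-1}^{n-1} (n-j) · p_{k-1}^{(j)}`. -/
theorem p_recursion (n k : ℕ) (hn : 1 ≤ n) (hk : 1 ≤ k) (hkn : k ≤ n) :
    (n : ℝ) * ((n : ℝ) + 1) / 2 * p n k =
      ∑ j ∈ Finset.Icc (k - 1) (n - 1), ((n : ℝ) - (j : ℝ)) * p j (k - 1) := by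
  obtain ⟨m, rfl⟩ : ∃ m, k = m + 1 := ⟨k - 1, by omega⟩
  simp only [Nat.add_sub_cancel]
  simp only [p]
  have hn0 : (n : ℝ) ≠ 0 := Nat.cast_ne_zero.mpr (by omega)
  have hn1 : (n : ℝ) + 1 ≠ 0 := by positivity
  -- abbreviations
  set F : ∀ (i : Fin m → ℕ), ℝ := fun i => ∏ j : Fin m,
        (i j : ℝ) /
          (((∑ l ∈ Finset.univ.filter (fun l => l ≤ j), i l : ℕ) : ℝ) *
            (((∑ l ∈ Finset.univ.filter (fun l => l ≤ j), i l : ℕ) : ℝ) + 1)) with hF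
  have key :
      ∑ i ∈ (Fintype.piFinset fun _ : Fin (m+1) => Finset.Icc 1 n).filter
          (fun i => ∑ j, i j = n),
        ∏ j : Fin (m+1),
          (i j : ℝ) /
            (((∑ l ∈ Finset.univ.filter (fun l => l ≤ j), i l : ℕ) : ℝ) *
              (((∑ l ∈ Finset.univ.filter (fun l => l ≤ j), i l : ℕ) : ℝ) + 1))
      = ∑ x ∈ (Finset.Icc m (n-1)).sigma (fun j =>
            (Fintype.piFinset fun _ : Fin m => Finset.Icc 1 j).filter
              (fun i => ∑ l, i l = j)),
          (((n : ℝ) - (x.1 : ℝ)) / ((n:ℝ) * ((n:ℝ)+1))) * F x.2 := by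
    refine Finset.sum_nbij'
      (fun i => ⟨∑ l : Fin m, i (Fin.castSucc l), Fin.init i⟩)
      (fun x => Fin.snoc x.2 (n - x.1)) ?_ ?_ ?_ ?_ ?_
    · rintro i hi
      simp only [mem_filter, Fintype.mem_piFinset, Finset.mem_Icc] at hi
      obtain ⟨hmem, hsum⟩ := hi
      have hsplit : ∑ l : Fin m, i (Fin.castSucc l) + i (Fin.last m) = n := by
        rw [← Fin.sum_univ_castSucc]; exact hsum
      have hlast := hmem (Fin.last m)
      simp only [Finset.mem_sigma, mem_filter, Fintype.mem_piFinset, Finset.mem_Icc,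
        Finset.mem_Icc]
      refine ⟨⟨?_, ?_⟩, ?_, rfl⟩
      · calc m = ∑ _l : Fin m, 1 := by simp
          _ ≤ ∑ l : Fin m, i (Fin.castSucc l) :=
            Finset.sum_le_sum (fun l _ => (hmem _).1)
      · omega
      · intro l
        refine ⟨(hmem _).1, ?_⟩
        exact Finset.single_le_sum (f := fun l : Fin m => i (Fin.castSucc l))
          (fun _ _ => Nat.zero_le _) (Finset.mem_univ l)
    · rintro ⟨j, i'⟩ hx
      simp only [Finset.mem_sigma, mem_filter, Fintype.mem_piFinset, Finset.mem_Icc] at hx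
      obtain ⟨hj, hmem, hsum⟩ := hx
      simp only [mem_filter, Fintype.mem_piFinset, Finset.mem_Icc]
      constructor
      · intro l
        induction l using Fin.lastCases with
        | last => simp only [Fin.snoc_last]; omega
        | cast l' =>
          rw [Fin.snoc_castSucc]
          exact ⟨(hmem _).1, le_trans (hmem _).2 (by omega)⟩
      · rw [Fin.sum_univ_castSucc]
        simp only [Fin.snoc_castSucc, Fin.snoc_last, hsum]
        omega
    · rintro i hi
      simp only [mem_filter, Fintype.mem_piFinset, Finset.mem_Icc] at hi
      obtain ⟨hmem, hsum⟩ := hi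
      have hsplit : ∑ l : Fin m, i (Fin.castSucc l) + i (Fin.last m) = n := by
        rw [← Fin.sum_univ_castSucc]; exact hsum
      have h0 : n - ∑ l : Fin m, i (Fin.castSucc l) = i (Fin.last m) := by omega
      show Fin.snoc (Fin.init i) (n - ∑ l : Fin m, i (Fin.castSucc l)) = i
      rw [h0]
      exact Fin.snoc_init_self i
    · rintro ⟨j, i'⟩ hx
      simp only [Finset.mem_sigma, mem_filter, Fintype.mem_piFinset, Finset.mem_Icc] at hx
      obtain ⟨hj, hmem, hsum⟩ := hx
      show (⟨∑ l : Fin m, (Fin.snoc i' (n - j) : Fin (m+1) → ℕ) (Fin.castSucc l),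
          Fin.init (Fin.snoc i' (n - j) : Fin (m+1) → ℕ)⟩ : (_ : ℕ) × (Fin m → ℕ)) = ⟨j, i'⟩
      have h2 : ∑ l : Fin m, (Fin.snoc i' (n - j) : Fin (m+1) → ℕ) (Fin.castSucc l) = j := by
        simp only [Fin.snoc_castSucc]; exact hsum
      rw [h2, Fin.init_snoc]
    · rintro i hi
      simp only [mem_filter, Fintype.mem_piFinset, Finset.mem_Icc] at hi
      obtain ⟨hmem, hsum⟩ := hi
      have hsplit : ∑ l : Fin m, i (Fin.castSucc l) + i (Fin.last m) = n := by
        rw [← Fin.sum_univ_castSucc]; exact hsum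
      rw [Fin.prod_univ_castSucc]
      have hlastsum : ∑ l ∈ Finset.univ.filter (fun l => l ≤ Fin.last m), i l = n := by
        rw [filter_le_last]; exact hsum
      rw [hlastsum]
      have hinit : ∀ j' : Fin m,
          (i (Fin.castSucc j') : ℝ) /
            (((∑ l ∈ Finset.univ.filter (fun l => l ≤ Fin.castSucc j'), i l : ℕ) : ℝ) *
              (((∑ l ∈ Finset.univ.filter (fun l => l ≤ Fin.castSucc j'), i l : ℕ) : ℝ) + 1))
          = (Fin.init i j' : ℝ) /
            (((∑ l ∈ Finset.univ.filter (fun l => l ≤ j'), Fin.init i l : ℕ) : ℝ) *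
              (((∑ l ∈ Finset.univ.filter (fun l => l ≤ j'), Fin.init i l : ℕ) : ℝ) + 1)) := by
        intro j'
        rw [partial_castSucc]
        rfl
      rw [Finset.prod_congr rfl (fun j' _ => hinit j')]
      simp only [hF]
      show _ = (((n : ℝ) - ((∑ l : Fin m, i (Fin.castSucc l) : ℕ) : ℝ)) / ((n:ℝ) * ((n:ℝ)+1))) * F (Fin.init i)
      have hcast : ((n : ℝ) - ((∑ l : Fin m, i (Fin.castSucc l) : ℕ) : ℝ)) = (i (Fin.last m) : ℝ) := by
        rw [← hsplit]; push_cast; ring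
      rw [hcast, mul_comm]
  rw [key, Finset.sum_sigma]
  simp only [Finset.mul_sum]
  refine Finset.sum_congr rfl fun j hj => ?_
  refine Finset.sum_congr rfl fun i' _ => ?_
  exact aux_alg m _ _ _ (mul_ne_zero hn0 hn1)
end

section
/- For all integers n ≥ 2 and 1 ≤ k ≤ n, the probabilities p_k^(n) satisfy the three-term recursion (n(n+1)/2)·p_k^(n) − n(n−1)·p_k^(n−1) + ((n−1)(n−2)/2)·p_k^(n−2) = p_{k−1}^(n−1), where p_k^(m) := 0 whenever k > m. -/
open Finset

namespace Buchta

noncomputable def term {K : ℕ} (i : Fin K → ℕ) (j : Fin K) : ℝ :=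
  (i j : ℝ) /
    (((∑ l ∈ Finset.univ.filter (fun l => l ≤ j), i l : ℕ) : ℝ) *
      (((∑ l ∈ Finset.univ.filter (fun l => l ≤ j), i l : ℕ) : ℝ) + 1))

def comps (n K : ℕ) : Finset (Fin K → ℕ) :=
  (Fintype.piFinset fun _ : Fin K => Finset.Icc 1 n).filter (fun i => ∑ j, i j = n)

lemma p_eq (n K : ℕ) : p n K = 2 ^ K * ∑ i ∈ comps n K, ∏ j, term i j := rfl

lemma mem_comps {n K : ℕ} {i : Fin K → ℕ} :
    i ∈ comps n K ↔ (∀ j, 1 ≤ i j) ∧ ∑ j, i j = n := by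
  simp only [comps, Finset.mem_filter, Fintype.mem_piFinset, Finset.mem_Icc]
  constructor
  · rintro ⟨h1, h2⟩; exact ⟨fun j => (h1 j).1, h2⟩
  · rintro ⟨h1, h2⟩
    refine ⟨fun j => ⟨h1 j, ?_⟩, h2⟩
    calc i j ≤ ∑ l, i l := Finset.single_le_sum (fun l _ => Nat.zero_le _) (Finset.mem_univ j)
    _ = n := h2

lemma partial_castSucc {k : ℕ} (i : Fin (k + 1) → ℕ) (j : Fin k) :
    ∑ l ∈ Finset.univ.filter (fun l => l ≤ j.castSucc), i l
      = ∑ l ∈ Finset.univ.filter (fun l => l ≤ j), Fin.init i l := by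
  rw [Finset.sum_filter, Finset.sum_filter, Fin.sum_univ_castSucc]
  have hlast : ¬ (Fin.last k ≤ j.castSucc) := not_le.2 (Fin.castSucc_lt_last j)
  rw [if_neg hlast, add_zero]
  refine Finset.sum_congr rfl fun l _ => ?_
  simp [Fin.castSucc_le_castSucc_iff, Fin.init]

lemma partial_last {k : ℕ} (i : Fin (k + 1) → ℕ) :
    ∑ l ∈ Finset.univ.filter (fun l => l ≤ Fin.last k), i l = ∑ l, i l := by
  rw [Finset.filter_true_of_mem fun l _ => Fin.le_last l]

lemma term_castSucc {k : ℕ} (i : Fin (k + 1) → ℕ) (j : Fin k) :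
    term i j.castSucc = term (Fin.init i) j := by
  unfold term
  rw [partial_castSucc]
  rfl

lemma prod_term_succ {n k : ℕ} {i : Fin (k + 1) → ℕ} (hi : i ∈ comps n (k + 1)) :
    ∏ j, term i j
      = (∏ j : Fin k, term (Fin.init i) j) * ((i (Fin.last k) : ℝ) / ((n : ℝ) * ((n : ℝ) + 1))) := by
  rw [Fin.prod_univ_castSucc]
  congr 1
  · exact Finset.prod_congr rfl fun j _ => term_castSucc i j
  · unfold term
    rw [partial_last, (mem_comps.1 hi).2]

/-- The bijection step. -/
lemma sum_bij_step (n k : ℕ) (hn : 0 < n) :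
    ∑ i ∈ comps n (k + 1), (i (Fin.last k) : ℝ) * ∏ j : Fin k, term (Fin.init i) j
      = ∑ m ∈ Finset.range n, ∑ v ∈ comps m k, ((n : ℝ) - (m : ℝ)) * ∏ j, term v j := by
  rw [← Finset.sum_sigma (Finset.range n) (fun m => comps m k)
      (fun x => ((n : ℝ) - (x.1 : ℝ)) * ∏ j, term x.2 j)]
  refine Finset.sum_nbij' (fun i => ⟨∑ j : Fin k, Fin.init i j, Fin.init i⟩)
    (fun x => Fin.snoc x.2 (n - x.1)) ?_ ?_ ?_ ?_ ?_
  · intro i hi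
    obtain ⟨h1, h2⟩ := mem_comps.1 hi
    have hsum : ∑ j : Fin k, Fin.init i j + i (Fin.last k) = n := by
      rw [← h2, Fin.sum_univ_castSucc]; rfl
    simp only [Finset.mem_sigma, Finset.mem_range]
    constructor
    · have := h1 (Fin.last k); omega
    · exact mem_comps.2 ⟨fun j => h1 j.castSucc, rfl⟩
  · intro x hx
    simp only [Finset.mem_sigma, Finset.mem_range] at hx
    obtain ⟨hm, hv⟩ := hx
    obtain ⟨h1, h2⟩ := mem_comps.1 hv
    refine mem_comps.2 ⟨?_, ?_⟩
    · intro j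
      refine Fin.lastCases ?_ ?_ j
      · rw [Fin.snoc_last]; omega
      · intro j'; rw [Fin.snoc_castSucc]; exact h1 j'
    · rw [Fin.sum_univ_castSucc]
      simp only [Fin.snoc_castSucc, Fin.snoc_last, h2]
      omega
  · intro i hi
    obtain ⟨h1, h2⟩ := mem_comps.1 hi
    have hsum : ∑ j : Fin k, Fin.init i j + i (Fin.last k) = n := by
      rw [← h2, Fin.sum_univ_castSucc]; rfl
    have : n - ∑ j : Fin k, Fin.init i j = i (Fin.last k) := by omega
    dsimp only
    rw [this, Fin.snoc_init_self]
  · intro x hx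
    simp only [Finset.mem_sigma, Finset.mem_range] at hx
    obtain ⟨hm, hv⟩ := hx
    obtain ⟨h1, h2⟩ := mem_comps.1 hv
    have h3 : ∑ j : Fin k, Fin.init (Fin.snoc x.2 (n - x.1) : Fin (k+1) → ℕ) j = x.1 := by
      rw [Fin.init_snoc, h2]
    refine Sigma.ext h3 (heq_of_eq ?_)
    dsimp only
    rw [Fin.init_snoc]
  · intro i hi
    obtain ⟨h1, h2⟩ := mem_comps.1 hi
    have hsum : ∑ j : Fin k, Fin.init i j + i (Fin.last k) = n := by
      rw [← h2, Fin.sum_univ_castSucc]; rfl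
    have : ((n : ℝ) - (∑ j : Fin k, Fin.init i j : ℕ)) = (i (Fin.last k) : ℝ) := by
      rw [← Nat.cast_sub (by omega)]
      congr 1
      omega
    simp only [this]

/-- The key identity. -/
lemma key (n k : ℕ) :
    (n : ℝ) * ((n : ℝ) + 1) / 2 * p n (k + 1)
      = ∑ m ∈ Finset.range n, ((n : ℝ) - (m : ℝ)) * p m k := by
  rcases Nat.eq_zero_or_pos n with rfl | hn
  · simp [p_eq]
  have hne : (n : ℝ) * ((n : ℝ) + 1) ≠ 0 := by positivity
  calc (n : ℝ) * ((n : ℝ) + 1) / 2 * p n (k + 1)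
      = ∑ i ∈ comps n (k + 1), (n : ℝ) * ((n : ℝ) + 1) / 2
          * (2 ^ (k + 1) * ((∏ j : Fin k, term (Fin.init i) j)
            * ((i (Fin.last k) : ℝ) / ((n : ℝ) * ((n : ℝ) + 1))))) := by
        rw [p_eq, Finset.mul_sum, Finset.mul_sum]
        exact Finset.sum_congr rfl fun i hi => by rw [prod_term_succ hi]
    _ = ∑ i ∈ comps n (k + 1), 2 ^ k * ((i (Fin.last k) : ℝ) * ∏ j : Fin k, term (Fin.init i) j) := by
        refine Finset.sum_congr rfl fun i hi => ?_
        field_simp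
        ring
    _ = 2 ^ k * ∑ i ∈ comps n (k + 1), (i (Fin.last k) : ℝ) * ∏ j : Fin k, term (Fin.init i) j :=
        (Finset.mul_sum _ _ _).symm
    _ = 2 ^ k * ∑ m ∈ Finset.range n, ∑ v ∈ comps m k, ((n : ℝ) - (m : ℝ)) * ∏ j, term v j := by
        rw [sum_bij_step n k hn]
    _ = ∑ m ∈ Finset.range n, ((n : ℝ) - (m : ℝ)) * p m k := by
        rw [Finset.mul_sum]
        refine Finset.sum_congr rfl fun m _ => ?_
        rw [p_eq, Finset.mul_sum, Finset.mul_sum, Finset.mul_sum]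
        exact Finset.sum_congr rfl fun v _ => by ring

end Buchta

/-- For all `n ≥ 2` and `1 ≤ k ≤ n`, the probabilities satisfy the three-term recursion
`(n(n+1)/2)·p_k^{(n)} − n(n−1)·p_k^{(n−1)} + ((n−1)(n−2)/2)·p_k^{(n−2)} = p_{k−1}^{(n−1)}`
(where `p k m = 0` whenever `k > m`, as is automatic from the definition). -/
theorem p_three_term_recursion (n k : ℕ) (hn : 2 ≤ n) (hk : 1 ≤ k) (hkn : k ≤ n) :
    (n : ℝ) * ((n : ℝ) + 1) / 2 * p n k - (n : ℝ) * ((n : ℝ) - 1) * p (n - 1) k +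
        ((n : ℝ) - 1) * ((n : ℝ) - 2) / 2 * p (n - 2) k =
      p (n - 1) (k - 1) := by
  obtain ⟨a, rfl⟩ : ∃ a, n = a + 2 := ⟨n - 2, by omega⟩
  obtain ⟨k', rfl⟩ : ∃ k', k = k' + 1 := ⟨k - 1, by omega⟩
  have e2 : a + 2 - 1 = a + 1 := by omega
  have e3 : a + 2 - 2 = a := by omega
  rw [e2, e3]
  simp only [Nat.add_sub_cancel]
  have c2 : ((a + 2 : ℕ) : ℝ) = (a : ℝ) + 2 := by push_cast; ring
  have c1 : ((a + 1 : ℕ) : ℝ) = (a : ℝ) + 1 := by push_cast; ring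
  have h2 := Buchta.key (a + 2) k'
  have h1 := Buchta.key (a + 1) k'
  have h0 := Buchta.key a k'
  rw [c2] at h2
  rw [c1] at h1
  have hA : (a : ℝ) + 2 - 1 = ((a + 1 : ℕ) : ℝ) := by push_cast; ring
  have hB : ((a : ℝ) + 2) * ((a : ℝ) + 2 + 1) / 2 = ((a:ℝ)+2) * ((a:ℝ)+3) / 2 := by ring
  -- rewrite goal coefficients in terms of key lemma shapes
  have goal1 : ((a + 2 : ℕ) : ℝ) * (((a + 2 : ℕ) : ℝ) + 1) / 2 * p (a + 2) (k' + 1)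
      = ∑ m ∈ Finset.range (a + 2), (((a:ℝ) + 2) - (m : ℝ)) * p m k' := by
    rw [h2.symm, c2]
  have goal2 : ((a + 1 : ℕ) : ℝ) * (((a + 1 : ℕ) : ℝ) + 1) / 2 * p (a + 1) (k' + 1)
      = ∑ m ∈ Finset.range (a + 1), (((a:ℝ) + 1) - (m : ℝ)) * p m k' := by
    rw [h1.symm, c1]
  -- Now massage the goal.
  rw [c2]
  have key2 : ((a:ℝ) + 2) * (((a:ℝ) + 2) + 1) / 2 * p (a + 2) (k' + 1)
      = ∑ m ∈ Finset.range (a + 2), (((a:ℝ) + 2) - (m : ℝ)) * p m k' := h2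
  have key1 : ((a:ℝ) + 1) * (((a:ℝ) + 1) + 1) / 2 * p (a + 1) (k' + 1)
      = ∑ m ∈ Finset.range (a + 1), (((a:ℝ) + 1) - (m : ℝ)) * p m k' := h1
  have key0 : ((a:ℝ)) * (((a:ℝ)) + 1) / 2 * p a (k' + 1)
      = ∑ m ∈ Finset.range a, (((a:ℝ)) - (m : ℝ)) * p m k' := h0
  have lhs_eq : ((a:ℝ) + 2) * (((a:ℝ) + 2) + 1) / 2 * p (a + 2) (k' + 1)
      - ((a:ℝ) + 2) * (((a:ℝ) + 2) - 1) * p (a + 1) (k' + 1)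
      + (((a:ℝ) + 2) - 1) * (((a:ℝ) + 2) - 2) / 2 * p a (k' + 1)
      = (∑ m ∈ Finset.range (a + 2), (((a:ℝ) + 2) - (m : ℝ)) * p m k')
        - 2 * (∑ m ∈ Finset.range (a + 1), (((a:ℝ) + 1) - (m : ℝ)) * p m k')
        + (∑ m ∈ Finset.range a, (((a:ℝ)) - (m : ℝ)) * p m k') := by
    rw [← key2, ← key1, ← key0]; ring
  rw [lhs_eq, Finset.sum_range_succ (fun m : ℕ => ((a:ℝ) + 2 - (m:ℝ)) * p m k') (a + 1)]
  have ha : ∑ m ∈ Finset.range a, ((a:ℝ) - m) * p m k'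
      = ∑ m ∈ Finset.range (a+1), ((a:ℝ) - m) * p m k' := by
    rw [Finset.sum_range_succ]; simp
  rw [ha]
  have e : ∑ m ∈ Finset.range (a+1),
        (((a:ℝ) + 2 - m) * p m k' - 2 * (((a:ℝ) + 1 - m) * p m k') + ((a:ℝ) - m) * p m k')
      = (∑ m ∈ Finset.range (a+1), ((a:ℝ) + 2 - m) * p m k')
        - 2 * (∑ m ∈ Finset.range (a+1), ((a:ℝ) + 1 - m) * p m k')
        + ∑ m ∈ Finset.range (a+1), ((a:ℝ) - m) * p m k' := by
    rw [Finset.sum_add_distrib, Finset.sum_sub_distrib, Finset.mul_sum]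
  have ez : ∑ m ∈ Finset.range (a+1),
        (((a:ℝ) + 2 - m) * p m k' - 2 * (((a:ℝ) + 1 - m) * p m k') + ((a:ℝ) - m) * p m k') = 0 :=
    Finset.sum_eq_zero fun m _ => by ring
  push_cast
  linarith [e, ez]
end

section
/- For every integer n ≥ 2 and every real z, the generating polynomials satisfy the three-term recurrence G_n(z) = (a_n·z + b_n)·G_{n−1}(z) − c_n·G_{n−2}(z), where a_n = 2/(n(n+1)), b_n = 2(n−1)/(n+1) and c_n = (n−1)(n−2)/(n(n+1)), with initial data G_0(z) = 1 and G_1(z) = z. -/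
open Finset

noncomputable def W {k : ℕ} (i : Fin k → ℕ) : ℝ :=
  ∏ j : Fin k,
    (i j : ℝ) /
      (((∑ l ∈ Finset.univ.filter (fun l => l ≤ j), i l : ℕ) : ℝ) *
        (((∑ l ∈ Finset.univ.filter (fun l => l ≤ j), i l : ℕ) : ℝ) + 1))

noncomputable def Q (n k : ℕ) : ℝ :=
  ∑ i ∈ (Fintype.piFinset fun _ : Fin k => Finset.Icc 1 n).filter
      (fun i => ∑ j, i j = n), W i


lemma p_eq (n k : ℕ) : p n k = 2 ^ k * Q n k := rfl

lemma Q_zero_zero : Q 0 0 = 1 := by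
  simp [Q, W]

lemma Q_succ_zero (n : ℕ) : Q (n+1) 0 = 0 := by
  simp [Q, W]

lemma Q_of_lt {n k : ℕ} (h : n < k) : Q n k = 0 := by
  unfold Q
  rw [Finset.filter_false_of_mem, Finset.sum_empty]
  intro f hf hs
  rw [Fintype.mem_piFinset] at hf
  have : (k : ℕ) ≤ ∑ j, f j := by
    calc (k:ℕ) = ∑ _j : Fin k, 1 := by simp
    _ ≤ ∑ j, f j := Finset.sum_le_sum fun j _ => (Finset.mem_Icc.mp (hf j)).1
  omega

lemma dom_eq {k m n : ℕ} (h : m ≤ n) :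
    (Fintype.piFinset fun _ : Fin k => Finset.Icc 1 n).filter (fun i => ∑ j, i j = m)
      = (Fintype.piFinset fun _ : Fin k => Finset.Icc 1 m).filter (fun i => ∑ j, i j = m) := by
  ext f
  simp only [mem_filter, Fintype.mem_piFinset, mem_Icc]
  constructor
  · rintro ⟨hf, hs⟩
    refine ⟨fun j => ⟨(hf j).1, ?_⟩, hs⟩
    calc f j ≤ ∑ l, f l := Finset.single_le_sum (fun _ _ => Nat.zero_le _) (mem_univ j)
    _ = m := hs
  · rintro ⟨hf, hs⟩
    exact ⟨fun j => ⟨(hf j).1, (hf j).2.trans h⟩, hs⟩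

lemma Q_eq_sum {m n : ℕ} (k : ℕ) (h : m ≤ n) :
    Q m k = ∑ f ∈ (Fintype.piFinset fun _ : Fin k => Finset.Icc 1 n).filter
      (fun i => ∑ j, i j = m), W f := by
  rw [Q, dom_eq h]

lemma partial_shift {k : ℕ} (f : Fin (k+1) → ℕ) (j : Fin k) :
    ∑ l ∈ univ.filter (fun l => l ≤ Fin.castSucc j), f l
      = ∑ l ∈ univ.filter (fun l => l ≤ j), f (Fin.castSucc l) := by
  have himg : (univ.filter (fun l : Fin (k+1) => l ≤ Fin.castSucc j))
      = (univ.filter (fun l : Fin k => l ≤ j)).image Fin.castSucc := by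
    ext l
    simp only [mem_filter, mem_univ, true_and, mem_image]
    constructor
    · intro hl
      have hlt : l ≠ Fin.last k :=
        (lt_of_le_of_lt hl (Fin.castSucc_lt_last j)).ne
      refine ⟨l.castPred hlt, ?_, Fin.castSucc_castPred l hlt⟩
      rw [← Fin.castSucc_le_castSucc_iff, Fin.castSucc_castPred]
      exact hl
    · rintro ⟨a, ha, rfl⟩
      exact Fin.castSucc_le_castSucc_iff.mpr ha
  rw [himg, Finset.sum_image]
  intro a _ b _ hab
  exact Fin.castSucc_injective _ hab

lemma W_snoc {k : ℕ} (g : Fin k → ℕ) (i : ℕ) :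
    W (Fin.snoc g i) = W g *
      ((i:ℝ) / ((((∑ l, g l) + i : ℕ):ℝ) * ((((∑ l, g l) + i : ℕ):ℝ) + 1))) := by
  unfold W
  rw [Fin.prod_univ_castSucc]
  congr 1
  · apply Finset.prod_congr rfl
    intro j _
    rw [partial_shift]
    simp [Fin.snoc_castSucc]
  · have huniv : (univ.filter (fun l : Fin (k+1) => l ≤ Fin.last k)) = univ := by
      apply Finset.filter_true_of_mem
      intro l _
      exact Fin.le_last l
    rw [huniv, Fin.snoc_last, Fin.sum_univ_castSucc]
    simp [Fin.snoc_castSucc, Fin.snoc_last]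

lemma Q_succ (n k : ℕ) :
    ((n:ℝ) * ((n:ℝ)+1)) * Q n (k+1) = ∑ i ∈ Icc 1 n, (i:ℝ) * Q (n - i) k := by
  rcases Nat.eq_zero_or_pos n with rfl | hn
  · simp
  have hne : ((n:ℝ) * ((n:ℝ)+1)) ≠ 0 := by positivity
  -- rewrite RHS Q's over the common range
  have hR : ∀ i ∈ Icc 1 n, (i:ℝ) * Q (n - i) k
      = ∑ f ∈ (Fintype.piFinset fun _ : Fin k => Finset.Icc 1 n).filter
          (fun f => ∑ j, f j = n - i), (i:ℝ) * W f := by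
    intro i hi
    rw [Q_eq_sum k (Nat.sub_le n i), Finset.mul_sum]
  rw [Finset.sum_congr rfl hR]
  have hsig := Finset.sum_sigma (s := Icc 1 n)
    (t := fun i => (Fintype.piFinset fun _ : Fin k => Finset.Icc 1 n).filter
          (fun f => ∑ j, f j = n - i))
    (f := fun x : Σ _i : ℕ, Fin k → ℕ => (x.1:ℝ) * W x.2)
  rw [← hsig]
  rw [Q, Finset.mul_sum]
  symm
  apply Finset.sum_bij' (i := fun (x : Σ _i : ℕ, Fin k → ℕ) _hx => (Fin.snoc x.2 x.1 : Fin (k+1) → ℕ))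
    (j := fun f _hf => (⟨f (Fin.last k), Fin.init f⟩ : Σ _i : ℕ, Fin k → ℕ))
  · rintro ⟨i, g⟩ hx
    simp only [Finset.mem_sigma, mem_filter, Fintype.mem_piFinset, mem_Icc] at hx
    obtain ⟨hi, hg, hs⟩ := hx
    rw [mem_filter, Fintype.mem_piFinset]
    constructor
    · intro j
      rcases Fin.eq_castSucc_or_eq_last j with ⟨j', rfl⟩ | rfl
      · rw [Fin.snoc_castSucc]; exact mem_Icc.mpr (hg j')
      · rw [Fin.snoc_last]; exact mem_Icc.mpr hi
    · rw [Fin.sum_univ_castSucc]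
      simp only [Fin.snoc_castSucc, Fin.snoc_last]
      rw [hs]
      omega
  · intro f hf
    rw [mem_filter, Fintype.mem_piFinset] at hf
    obtain ⟨hmem, hs⟩ := hf
    have hlast := mem_Icc.mp (hmem (Fin.last k))
    rw [Finset.mem_sigma, mem_filter, Fintype.mem_piFinset]
    have hsum : (∑ j : Fin k, Fin.init f j) + f (Fin.last k) = n := by
      rw [← hs, Fin.sum_univ_castSucc]; rfl
    refine ⟨mem_Icc.mpr hlast, fun j => hmem _, by dsimp only; omega⟩
  · rintro ⟨i, g⟩ hx
    simp only [Fin.snoc_last, Fin.init_snoc]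
  · intro f hf
    simp only [Fin.snoc_init_self]
  · rintro ⟨i, g⟩ hx
    simp only [Finset.mem_sigma, mem_filter, Fintype.mem_piFinset, mem_Icc] at hx
    obtain ⟨hi, hg, hs⟩ := hx
    rw [W_snoc]
    have : (∑ l, g l) + i = n := by omega
    rw [this]
    field_simp

noncomputable def S (n k : ℕ) : ℝ := ∑ m ∈ range n, ((n:ℝ) - (m:ℝ)) * Q m k

lemma sum_Icc_eq_S (n k : ℕ) :
    ∑ i ∈ Icc 1 n, (i:ℝ) * Q (n - i) k = S n k := by
  unfold S
  apply Finset.sum_bij' (i := fun i _ => n - i) (j := fun m _ => n - m)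
  · intro i hi
    rw [mem_Icc] at hi
    rw [mem_range]; omega
  · intro m hm
    rw [mem_range] at hm
    rw [mem_Icc]; omega
  · intro i hi; rw [mem_Icc] at hi; omega
  · intro m hm; rw [mem_range] at hm; omega
  · intro i hi
    rw [mem_Icc] at hi
    congr 1
    rw [Nat.cast_sub hi.2]
    ring

lemma nQ_eq_S (n k : ℕ) :
    ((n:ℝ) * ((n:ℝ)+1)) * Q n (k+1) = S n k := by
  rw [Q_succ, sum_Icc_eq_S]

lemma S_diff (n k : ℕ) :
    S (n+1) k = S n k + ∑ m ∈ range (n+1), Q m k := by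
  unfold S
  have h : ∀ m ∈ range (n+1), (((n:ℝ)+1) - (m:ℝ)) * Q m k
      = ((n:ℝ) - (m:ℝ)) * Q m k + Q m k := by
    intro m _; push_cast; ring
  rw [Finset.sum_congr rfl (by push_cast at h ⊢; exact h), Finset.sum_add_distrib]
  congr 1
  rw [Finset.sum_range_succ]
  simp

lemma Q_rec (n k : ℕ) :
    (((n:ℝ)+2) * ((n:ℝ)+3)) * Q (n+2) (k+1)
      = 2*((n:ℝ)+1)*((n:ℝ)+2) * Q (n+1) (k+1)
        - (n:ℝ)*((n:ℝ)+1) * Q n (k+1) + Q (n+1) k := by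
  have h2 := nQ_eq_S (n+2) k
  have h1 := nQ_eq_S (n+1) k
  have h0 := nQ_eq_S n k
  have d2 := S_diff (n+1) k
  have d1 := S_diff n k
  have ht : ∑ m ∈ range (n+2), Q m k = (∑ m ∈ range (n+1), Q m k) + Q (n+1) k :=
    Finset.sum_range_succ _ _
  push_cast at h2 h1 h0 d2 d1
  rw [ht] at d2
  linarith

lemma p_rec (n k : ℕ) :
    (((n:ℝ)+2) * ((n:ℝ)+3)) * p (n+2) (k+1)
      = 2*((n:ℝ)+1)*((n:ℝ)+2) * p (n+1) (k+1)
        - (n:ℝ)*((n:ℝ)+1) * p n (k+1) + 2 * p (n+1) k := by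
  simp only [p_eq]
  have := Q_rec n k
  rw [show (2:ℝ)^(k+1) = 2 * 2^k by ring]
  linear_combination (2 * (2:ℝ)^k) * this

lemma p_succ_zero (n : ℕ) : p (n+1) 0 = 0 := by
  rw [p_eq, Q_succ_zero, mul_zero]

lemma p_of_lt {n k : ℕ} (h : n < k) : p n k = 0 := by
  rw [p_eq, Q_of_lt h, mul_zero]

/-- `G n z = Σ_{k=1}^n p_k^{(n)} z^k` is the probability generating function of the
vertex number `f_0(T_n)`; by convention `G 0 z = 1` (note `p 0 0 = 1` and `p n 0 = 0`
for `n ≥ 1`, so the `k = 0` term is harmless). -/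
noncomputable def G (n : ℕ) (z : ℝ) : ℝ :=
  ∑ k ∈ Finset.range (n + 1), p n k * z ^ k

lemma G_zero (z : ℝ) : G 0 z = 1 := by
  rw [G]
  simp [p_eq, Q_zero_zero]

lemma Q_one_one : Q 1 1 = 1/2 := by
  have h := Q_succ 1 0
  rw [show Icc 1 1 = {1} by rfl] at h
  simp [Q_zero_zero] at h
  linarith

lemma G_one (z : ℝ) : G 1 z = z := by
  rw [G]
  rw [Finset.sum_range_succ, Finset.sum_range_one]
  rw [p_succ_zero, p_eq, Q_one_one]
  norm_num

lemma G_key (m : ℕ) (z : ℝ) :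
    (((m:ℝ)+2)*((m:ℝ)+3)) * G (m+2) z
      = (2*z + 2*((m:ℝ)+1)*((m:ℝ)+2)) * G (m+1) z - (m:ℝ)*((m:ℝ)+1) * G m z := by
  have hA : ∑ k ∈ range (m+2), p (m+1) (k+1) * z^(k+1) = G (m+1) z := by
    have h := Finset.sum_range_succ' (fun k => p (m+1) k * z^k) (m+2)
    rw [Finset.sum_range_succ] at h
    rw [p_of_lt (show m+1 < m+2 by omega), p_succ_zero] at h
    simp only [zero_mul, add_zero, pow_zero, mul_one] at h
    rw [← h, G]
  have hB : (m:ℝ)*((m:ℝ)+1) * (∑ k ∈ range (m+2), p m (k+1) * z^(k+1))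
      = (m:ℝ)*((m:ℝ)+1) * G m z := by
    have h := Finset.sum_range_succ' (fun k => p m k * z^k) (m+2)
    rw [Finset.sum_range_succ, Finset.sum_range_succ] at h
    rw [p_of_lt (show m < m+2 by omega), p_of_lt (show m < m+1 by omega)] at h
    simp only [zero_mul, add_zero, pow_zero, mul_one] at h
    rw [show ∑ k ∈ range (m+1), p m k * z^k = G m z from rfl] at h
    rw [h]
    rcases Nat.eq_zero_or_pos m with rfl | hm
    · push_cast; ring
    · obtain ⟨j, rfl⟩ : ∃ j, m = j + 1 := ⟨m - 1, by omega⟩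
      rw [p_succ_zero]
      ring
  have hC : ∑ k ∈ range (m+2), p (m+1) k * z^(k+1) = z * G (m+1) z := by
    rw [G, Finset.mul_sum]
    exact Finset.sum_congr rfl fun k _ => by ring
  rw [G, Finset.mul_sum]
  rw [Finset.sum_range_succ' (fun k => (((m:ℝ)+2)*((m:ℝ)+3)) * (p (m+2) k * z^k)) (m+2)]
  rw [p_succ_zero]
  simp only [zero_mul, mul_zero, add_zero]
  have hterm : ∀ k ∈ range (m+2),
      (((m:ℝ)+2)*((m:ℝ)+3)) * (p (m+2) (k+1) * z^(k+1))
        = 2*((m:ℝ)+1)*((m:ℝ)+2) * (p (m+1) (k+1) * z^(k+1))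
          - (m:ℝ)*((m:ℝ)+1) * (p m (k+1) * z^(k+1))
          + 2 * (p (m+1) k * z^(k+1)) := by
    intro k _
    linear_combination z^(k+1) * p_rec m k
  rw [Finset.sum_congr rfl hterm]
  rw [Finset.sum_add_distrib, Finset.sum_sub_distrib]
  rw [← Finset.mul_sum, ← Finset.mul_sum, ← Finset.mul_sum]
  rw [hA, hC]
  have hB' := hB
  linarith [hB']

/-- Theorem 1: the probability generating functions `G_n` satisfy the three-term recurrence
`G_n(z) = (a_n z + b_n) G_{n−1}(z) − c_n G_{n−2}(z)` for `n ≥ 2`, with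
`a_n = 2/(n(n+1))`, `b_n = 2(n−1)/(n+1)`, `c_n = (n−1)(n−2)/(n(n+1))`, and
initial data `G_0(z) = 1`, `G_1(z) = z`. -/
theorem G_three_term_recurrence (n : ℕ) (hn : 2 ≤ n) (z : ℝ) :
    G n z =
        (2 / ((n : ℝ) * ((n : ℝ) + 1)) * z + 2 * ((n : ℝ) - 1) / ((n : ℝ) + 1)) * G (n - 1) z -
          ((n : ℝ) - 1) * ((n : ℝ) - 2) / ((n : ℝ) * ((n : ℝ) + 1)) * G (n - 2) z ∧
      G 0 z = 1 ∧ G 1 z = z := by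
  refine ⟨?_, G_zero z, G_one z⟩
  obtain ⟨m, rfl⟩ : ∃ m, n = m + 2 := ⟨n - 2, by omega⟩
  have key := G_key m z
  have h1 : (m + 2 : ℕ) - 1 = m + 1 := by omega
  have h2 : (m + 2 : ℕ) - 2 = m := by omega
  rw [h1, h2]
  have hcast : ((m + 2 : ℕ) : ℝ) = (m : ℝ) + 2 := by push_cast; ring
  rw [hcast]
  have hne1 : ((m:ℝ) + 2) * ((m:ℝ) + 3) ≠ 0 := by positivity
  have hne2 : ((m:ℝ) + 3) ≠ 0 := by positivity
  apply mul_left_cancel₀ hne1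
  rw [key]
  field_simp
  ring
end

section
/- For every integer n ≥ 1, Σ_{k=1}^{n} p_k^(n) = 1; that is, (p_k^(n))_{k=1}^n is a probability distribution, or equivalently G_n(1) = 1. -/
open Finset

lemma filter_castSucc (k : ℕ) (j : Fin k) :
    (Finset.univ.filter (fun l : Fin (k+1) => l ≤ j.castSucc)) =
    (Finset.univ.filter (fun l : Fin k => l ≤ j)).map Fin.castSuccEmb := by
  ext a
  simp only [Finset.mem_filter, Finset.mem_map, Finset.mem_univ, true_and]
  have hemb : ∀ b : Fin k, (Fin.castSuccEmb b : Fin (k+1)) = b.castSucc := fun b => rfl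
  constructor
  · intro h
    have ha : (a : ℕ) ≤ (j : ℕ) := h
    have hlt : (a : ℕ) < k := lt_of_le_of_lt ha j.isLt
    refine ⟨⟨a, hlt⟩, by simpa [Fin.le_def] using ha, ?_⟩
    rw [hemb]
    ext
    simp
  · rintro ⟨b, hb, rfl⟩
    rw [hemb]
    exact Fin.castSucc_le_castSucc_iff.2 hb

lemma filter_last (k : ℕ) :
    (Finset.univ.filter (fun l : Fin (k+1) => l ≤ Fin.last k)) = Finset.univ := by
  simp [Fin.le_last]

lemma p_succ (n k : ℕ) (hn : 1 ≤ n) :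
    p n (k+1) = ∑ m ∈ Finset.Icc 1 n, (2 * (m : ℝ) / ((n : ℝ) * ((n : ℝ) + 1))) * p (n-m) k := by
  classical
  set G : (Fin (k+1) → ℕ) → ℝ := fun i =>
    ∏ j : Fin (k+1),
      (i j : ℝ) /
        (((∑ l ∈ Finset.univ.filter (fun l => l ≤ j), i l : ℕ) : ℝ) *
          (((∑ l ∈ Finset.univ.filter (fun l => l ≤ j), i l : ℕ) : ℝ) + 1)) with hG
  set A := (Fintype.piFinset fun _ : Fin (k+1) => Finset.Icc 1 n).filter
      (fun i => ∑ j, i j = n) with hA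
  set B : ℕ → Finset (Fin k → ℕ) := fun m =>
    (Fintype.piFinset fun _ : Fin k => Finset.Icc 1 (n-m)).filter
      (fun i => ∑ j, i j = n - m) with hB
  -- Step 1: reindex the sum over A as a double sum
  have step1 : ∑ i ∈ A, G i =
      ∑ m ∈ Finset.Icc 1 n, ∑ i' ∈ B m, G (Fin.snoc i' m) := by
    rw [Finset.sum_sigma']
    refine Finset.sum_bij' (fun i _ => (⟨i (Fin.last k), Fin.init i⟩ : (_ : ℕ) × (Fin k → ℕ)))
      (fun a _ => Fin.snoc a.2 a.1) ?_ ?_ ?_ ?_ ?_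
    · intro i hi
      rw [hA, Finset.mem_filter, Fintype.mem_piFinset] at hi
      obtain ⟨hpi, hs⟩ := hi
      have hlast := Finset.mem_Icc.1 (hpi (Fin.last k))
      rw [Finset.mem_sigma]
      have hsum : (∑ b : Fin k, Fin.init i b) + i (Fin.last k) = n := by
        rw [← hs, Fin.sum_univ_castSucc]
        rfl
      refine ⟨Finset.mem_Icc.2 hlast, ?_⟩
      show Fin.init i ∈ B (i (Fin.last k))
      rw [hB]
      rw [Finset.mem_filter, Fintype.mem_piFinset]
      constructor
      · intro b
        have hb := Finset.mem_Icc.1 (hpi b.castSucc)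
        rw [Finset.mem_Icc]
        refine ⟨hb.1, ?_⟩
        have : Fin.init i b ≤ ∑ b : Fin k, Fin.init i b :=
          Finset.single_le_sum (fun c _ => Nat.zero_le _) (Finset.mem_univ b)
        omega
      · omega
    · rintro ⟨m, i'⟩ ha
      dsimp only
      obtain ⟨hm, hi'⟩ := Finset.mem_sigma.1 ha
      obtain ⟨hm1, hm2⟩ := Finset.mem_Icc.1 hm
      obtain ⟨hpi, hs⟩ := Finset.mem_filter.1 hi'
      rw [Fintype.mem_piFinset] at hpi
      dsimp only at hpi hs hm1 hm2
      rw [hA, Finset.mem_filter]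
      constructor
      · rw [Fintype.mem_piFinset]
        intro j
        refine Fin.lastCases ?_ ?_ j
        · simpa using Finset.mem_Icc.2 ⟨hm1, hm2⟩
        · intro b
          have := Finset.mem_Icc.1 (hpi b)
          rw [Fin.snoc_castSucc, Finset.mem_Icc]
          exact ⟨this.1, le_trans this.2 (Nat.sub_le n m)⟩
      · rw [Fin.sum_univ_castSucc]
        simp only [Fin.snoc_castSucc, Fin.snoc_last]
        rw [hs]
        omega
    · intro i hi
      exact Fin.snoc_init_self i
    · rintro ⟨m, i'⟩ ha
      dsimp only
      rw [Fin.snoc_last, Fin.init_snoc]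
    · intro i hi
      rw [Fin.snoc_init_self]
  have hGsnoc : ∀ m ∈ Finset.Icc 1 n, ∀ i' ∈ B m, G (Fin.snoc i' m) =
      (∏ j : Fin k, (i' j : ℝ) /
        (((∑ l ∈ Finset.univ.filter (fun l => l ≤ j), i' l : ℕ) : ℝ) *
          (((∑ l ∈ Finset.univ.filter (fun l => l ≤ j), i' l : ℕ) : ℝ) + 1))) *
        ((m : ℝ) / ((n : ℝ) * ((n : ℝ) + 1))) := by
    intro m hm i' hi'
    obtain ⟨hm1, hm2⟩ := Finset.mem_Icc.1 hm
    have hs : ∑ j : Fin k, i' j = n - m := by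
      rw [hB] at hi'
      exact (Finset.mem_filter.1 hi').2
    rw [hG]
    beta_reduce
    rw [Fin.prod_univ_castSucc]
    congr 1
    · refine Finset.prod_congr rfl fun j _ => ?_
      have hden : ∑ l ∈ Finset.univ.filter (fun l : Fin (k+1) => l ≤ j.castSucc),
          Fin.snoc i' m l = ∑ l ∈ Finset.univ.filter (fun l : Fin k => l ≤ j), i' l := by
        rw [filter_castSucc, Finset.sum_map]
        refine Finset.sum_congr rfl fun b _ => ?_
        rw [show (Fin.castSuccEmb b : Fin (k+1)) = b.castSucc from rfl, Fin.snoc_castSucc]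
      rw [Fin.snoc_castSucc, hden]
    · have hfull : ∑ l ∈ Finset.univ.filter (fun l : Fin (k+1) => l ≤ Fin.last k),
          Fin.snoc i' m l = n := by
        rw [filter_last, Fin.sum_univ_castSucc]
        simp only [Fin.snoc_castSucc, Fin.snoc_last]
        omega
      rw [Fin.snoc_last, hfull]
  have hp1 : p n (k+1) = 2^(k+1) * ∑ i ∈ A, G i := by
    rw [p, ← hA, ← hG]
  rw [hp1, step1, Finset.mul_sum]
  refine Finset.sum_congr rfl fun m hm => ?_
  rw [Finset.sum_congr rfl (fun i' hi' => hGsnoc m hm i' hi'), ← Finset.sum_mul]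
  have hp2 : p (n-m) k = 2^k * ∑ i' ∈ B m,
      ∏ j : Fin k, (i' j : ℝ) /
        (((∑ l ∈ Finset.univ.filter (fun l => l ≤ j), i' l : ℕ) : ℝ) *
          (((∑ l ∈ Finset.univ.filter (fun l => l ≤ j), i' l : ℕ) : ℝ) + 1)) := by
    rw [p, hB]
  rw [hp2]
  ring

lemma p_zero_zero : p 0 0 = 1 := by
  simp [p]

lemma p_zero (n : ℕ) (hn : 1 ≤ n) : p n 0 = 0 := by
  simp [p, Finset.filter_eq_empty_iff]
  omega

lemma p_eq_zero_of_lt (n k : ℕ) (h : n < k) : p n k = 0 := by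
  have : ((Fintype.piFinset fun _ : Fin k => Finset.Icc 1 n).filter
      (fun i => ∑ j, i j = n)) = ∅ := by
    rw [Finset.filter_eq_empty_iff]
    intro i hi hsum
    have h1 : ∀ j, 1 ≤ i j := fun j => (Finset.mem_Icc.1 (Fintype.mem_piFinset.1 hi j)).1
    have hk : (k : ℕ) ≤ ∑ j, i j := by
      calc (k:ℕ) = ∑ _j : Fin k, 1 := by simp
      _ ≤ ∑ j, i j := Finset.sum_le_sum fun j _ => h1 j
    omega
  simp [p, this]

/-- For every `n ≥ 1`, `Σ_{k=1}^{n} p_k^{(n)} = 1`: the vertex-number probabilities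
form a probability distribution, equivalently `G_n(1) = 1`. -/
theorem p_sum_eq_one (n : ℕ) (hn : 1 ≤ n) :
    ∑ k ∈ Finset.Icc 1 n, p n k = 1 := by
  induction n using Nat.strong_induction_on with
  | _ n ih =>
  have hn0 : (0:ℝ) < (n:ℝ) := by exact_mod_cast hn
  have hc : ((n:ℝ) * ((n:ℝ)+1)) ≠ 0 := by positivity
  have h1 : ∑ k ∈ Finset.Icc 1 n, p n k = ∑ k ∈ Finset.range n, p n (k+1) := by
    rw [← Finset.Ico_add_one_right_eq_Icc, Finset.sum_Ico_eq_sum_range]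
    simp [add_comm]
  rw [h1]
  rw [Finset.sum_congr rfl (fun k _ => p_succ n k hn), Finset.sum_comm]
  have h3 : ∀ m ∈ Finset.Icc 1 n,
      ∑ k ∈ Finset.range n, (2 * (m : ℝ) / ((n : ℝ) * ((n : ℝ) + 1))) * p (n-m) k
        = 2 * (m : ℝ) / ((n : ℝ) * ((n : ℝ) + 1)) := by
    intro m hm
    rw [← Finset.mul_sum]
    obtain ⟨hm1, hm2⟩ := Finset.mem_Icc.1 hm
    have hin : ∑ k ∈ Finset.range n, p (n-m) k = 1 := by
      rcases eq_or_lt_of_le hm2 with rfl | hlt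
      · rw [Nat.sub_self]
        rw [Finset.sum_eq_single 0]
        · exact p_zero_zero
        · intro k _ hk
          exact p_eq_zero_of_lt 0 k (by omega)
        · intro h
          exact absurd (Finset.mem_range.2 (by omega)) h
      · have h1' : 1 ≤ n - m := by omega
        have h2' : n - m < n := by omega
        rw [← ih (n-m) h2' h1']
        refine (Finset.sum_subset ?_ ?_).symm
        · intro k hk
          rw [Finset.mem_Icc] at hk
          exact Finset.mem_range.2 (by omega)
        · intro k hk hk'
          rw [Finset.mem_Icc] at hk'
          rcases Nat.eq_zero_or_pos k with rfl | hkpos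
          · exact p_zero (n-m) h1'
          · exact p_eq_zero_of_lt (n-m) k (by omega)
    rw [hin, mul_one]
  rw [Finset.sum_congr rfl h3]
  have hsum : ∑ m ∈ Finset.Icc 1 n, (m:ℝ) = (n:ℝ)*((n:ℝ)+1)/2 := by
    have hg := Finset.sum_range_id_mul_two (n+1)
    have : ∑ m ∈ Finset.Icc 1 n, (m:ℕ) = ∑ m ∈ Finset.range (n+1), m := by
      rw [Finset.range_eq_Ico]
      rw [← Finset.Ico_add_one_right_eq_Icc]
      rw [Finset.sum_eq_sum_Ico_succ_bot (by omega : 0 < n+1)]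
      simp
    have hnat : (∑ m ∈ Finset.Icc 1 n, (m:ℕ)) * 2 = n * (n+1) := by
      rw [this, hg]
      simp [Nat.mul_comm]
    have := congrArg (fun x : ℕ => (x : ℝ)) hnat
    push_cast at this
    linarith
  calc ∑ m ∈ Finset.Icc 1 n, 2 * (m : ℝ) / ((n : ℝ) * ((n : ℝ) + 1))
      = (∑ m ∈ Finset.Icc 1 n, (m:ℝ)) * (2 / ((n : ℝ) * ((n : ℝ) + 1))) := by
        rw [Finset.sum_mul]
        exact Finset.sum_congr rfl fun m _ => by ring
    _ = 1 := by
        rw [hsum]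
        field_simp
end
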